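/- arXiv:2601.22943 — 3 statements merged into one kernel-verified Lean document; each statement's English description precedes it below -/
import Mathlib

section
/- Let u be dominated by v in a simple graph G, and let G' be obtained from G by deleting u (and its incident edges). Then for any two vertices x, y ≠ u, the distance between x and y in G' is at most their distance in G. (Deleting a dominated node does not increase shortest path distances among remaining vertices.) -/
/-- Closed neighborhood of a vertex. -/
def closedNbhd {V : Type*} (G : SimpleGraph V) (u : V) : Set V :=
  insert u (G.neighborSet u)

private lemma walk_aux {V : Type*} [DecidableEq V] (G : SimpleGraph V) (u v : V) (hne : u ≠ v)
    (hdom : closedNbhd G u ⊆ closedNbhd G v) :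
    ∀ {a b : V} (p : G.Walk a b) (ha : (if a = u then v else a) ≠ u)
      (hb : (if b = u then v else b) ≠ u),
      ∃ q : (G.induce {w : V | w ≠ u}).Walk ⟨_, ha⟩ ⟨_, hb⟩, q.length ≤ p.length := by
  intro a b p
  induction p with
  | nil => intro ha hb; exact ⟨SimpleGraph.Walk.nil, le_refl _⟩
  | @cons a c b hac p ih =>
    intro ha hb
    have hc : (if c = u then v else c) ≠ u := by
      split <;> [exact hne.symm; assumption]
    obtain ⟨q, hq⟩ := ih hc hb
    by_cases heq : (if a = u then v else a) = (if c = u then v else c)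
    · refine ⟨q.copy (by simp [heq]) rfl, ?_⟩
      simpa using Nat.le_succ_of_le hq
    · have hadj : G.Adj (if a = u then v else a) (if c = u then v else c) := by
        have key : ∀ w, w ≠ v → G.Adj u w → G.Adj v w := by
          intro w hwv hw
          have := hdom (show w ∈ closedNbhd G u from Or.inr hw)
          rcases this with h | h
          · exact absurd h hwv
          · exact h
        split at heq <;> split at heq
        · exact absurd rfl heq
        · rename_i h1 h2
          rw [if_pos h1, if_neg h2]
          exact key c (Ne.symm (by simpa [h1, h2] using heq)) (h1 ▸ hac)
        · rename_i h1 h2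
          rw [if_neg h1, if_pos h2]
          exact (key a (Ne.symm (by simpa [h1, h2] using Ne.symm heq)) (h2 ▸ hac).symm).symm
        · rename_i h1 h2
          simpa [h1, h2] using hac
      exact ⟨SimpleGraph.Walk.cons (by exact hadj) q, by exact Nat.succ_le_succ hq⟩

/-- Deleting a dominated node does not increase shortest-path distances among
the remaining vertices. -/
theorem stmt_2 {V : Type*} [Fintype V] (G : SimpleGraph V) (u v : V) (hne : u ≠ v)
    (hdom : closedNbhd G u ⊆ closedNbhd G v)
    (x y : V) (hx : x ≠ u) (hy : y ≠ u) :
    (G.induce {w : V | w ≠ u}).edist ⟨x, hx⟩ ⟨y, hy⟩ ≤ G.edist x y := by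
  rcases eq_or_ne (G.edist x y) ⊤ with h | h
  · simp [h]
  · haveI := Classical.decEq V
    obtain ⟨p, hp⟩ := SimpleGraph.exists_walk_of_edist_ne_top h
    obtain ⟨q, hq⟩ := walk_aux G u v hne hdom p (by simp [hx]) (by simp [hy])
    have h1 : (G.induce {w : V | w ≠ u}).edist ⟨x, hx⟩ ⟨y, hy⟩ ≤ q.length := by
      have := SimpleGraph.edist_le q
      convert this using 2 <;> simp [hx, hy]
    calc _ ≤ (q.length : ℕ∞) := h1
      _ ≤ (p.length : ℕ∞) := by exact_mod_cast hq
      _ = G.edist x y := hp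
end

section
/- Let (x,y) be an edge of a simple graph G dominated by a vertex w (i.e., N[x] ∩ N[y] ⊆ N[w], w ∉ {x,y}), and let G' = G − (x,y) be the graph with this edge removed. Then for any vertices u, v, the distance between u and v in G' is at most the distance in G plus 1. -/
open SimpleGraph

section

variable {V : Type*} {G : SimpleGraph V} {x y w : V}

lemma adj_of_mem_closedNbhd_of_ne {u v : V} (hv : v ∈ closedNbhd G u) (hne : v ≠ u) :
    G.Adj u v :=
  (Set.mem_insert_iff.mp hv).resolve_left hne

lemma adj_left_of_closedNbhd_inter_subset (hxy : G.Adj x y) (hwx : w ≠ x)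
    (hdom : closedNbhd G x ∩ closedNbhd G y ⊆ closedNbhd G w) : G.Adj w x :=
  adj_of_mem_closedNbhd_of_ne (hdom ⟨Set.mem_insert x _, Set.mem_insert_of_mem y hxy.symm⟩)
    hwx.symm

lemma deleteEdges_singleton_adj_of_ne {a b : V} (hab : G.Adj a b) (hax : a ≠ x) (hay : a ≠ y) :
    (G.deleteEdges {s(x, y)}).Adj a b := by
  refine deleteEdges_adj.mpr ⟨hab, fun he => ?_⟩
  rcases Sym2.mem_iff.mp ((Set.mem_singleton_iff.mp he) ▸ Sym2.mem_mk_left a b) with rfl | rfl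
  exacts [hax rfl, hay rfl]

lemma exists_walk_deleteEdges_length_le_of_isTrail (hwx : G.Adj w x) (hwy : G.Adj w y)
    {u v : V} (p : G.Walk u v) (hp : p.IsTrail) :
    ∃ q : (G.deleteEdges {s(x, y)}).Walk u v, q.length ≤ p.length + 1 := by
  induction p with
  | nil => exact ⟨.nil, by simp⟩
  | @cons a b c hab p ih =>
    rw [Walk.isTrail_cons] at hp
    by_cases he : s(a, b) = s(x, y)
    · have hw : ∀ z, z = x ∨ z = y → (G.deleteEdges {s(x, y)}).Adj w z := by
        rintro z (rfl | rfl)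
        exacts [deleteEdges_singleton_adj_of_ne hwx hwx.ne hwy.ne,
          deleteEdges_singleton_adj_of_ne hwy hwx.ne hwy.ne]
      have hwa := hw a (Sym2.mem_iff.mp (he ▸ Sym2.mem_mk_left a b))
      have hwb := hw b (Sym2.mem_iff.mp (he ▸ Sym2.mem_mk_right a b))
      refine ⟨.cons hwa.symm (.cons hwb (p.toDeleteEdge _ (he ▸ hp.2))), ?_⟩
      simp [Walk.length_transfer]
    · obtain ⟨q, hq⟩ := ih hp.1
      have hab' : (G.deleteEdges {s(x, y)}).Adj a b := deleteEdges_adj.mpr ⟨hab, he⟩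
      exact ⟨.cons hab' q, by simpa using hq⟩

theorem edist_deleteEdges_le_edist_add_one (hwx : G.Adj w x) (hwy : G.Adj w y) (u v : V) :
    (G.deleteEdges {s(x, y)}).edist u v ≤ G.edist u v + 1 := by
  classical
  rcases eq_or_ne (G.edist u v) ⊤ with htop | htop
  · simp [htop]
  obtain ⟨p, hp⟩ := exists_walk_of_edist_ne_top htop
  obtain ⟨q, hq⟩ :=
    exists_walk_deleteEdges_length_le_of_isTrail hwx hwy p.bypass p.bypass_isPath.isTrail
  calc (G.deleteEdges {s(x, y)}).edist u v ≤ q.length := edist_le q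
    _ ≤ (p.length + 1 : ℕ) := by
      exact_mod_cast hq.trans (Nat.add_le_add_right p.length_bypass_le_length 1)
    _ = G.edist u v + 1 := by push_cast; rw [hp]

end

theorem stmt_3_general {V : Type*} (G : SimpleGraph V) (x y w : V)
    (hxy : G.Adj x y) (hwx : w ≠ x) (hwy : w ≠ y)
    (hdom : closedNbhd G x ∩ closedNbhd G y ⊆ closedNbhd G w)
    (u v : V) :
    (G.deleteEdges {s(x, y)}).edist u v ≤ G.edist u v + 1 :=
  edist_deleteEdges_le_edist_add_one (adj_left_of_closedNbhd_inter_subset hxy hwx hdom)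
    (adj_left_of_closedNbhd_inter_subset hxy.symm hwy (Set.inter_comm _ _ ▸ hdom)) u v

/-- Deleting an edge dominated by a vertex `w` increases any shortest-path
distance by at most 1. -/
theorem stmt_3 {V : Type*} [Fintype V] (G : SimpleGraph V) (x y w : V)
    (hxy : G.Adj x y) (hwx : w ≠ x) (hwy : w ≠ y)
    (hdom : closedNbhd G x ∩ closedNbhd G y ⊆ closedNbhd G w)
    (u v : V) :
    (G.deleteEdges {s(x, y)}).edist u v ≤ G.edist u v + 1 :=
  stmt_3_general G x y w hxy hwx hwy hdom u v
end

section
/- Let u be dominated by v in a connected simple graph G with at least 3 vertices, and let G' = G − u. Then for any vertex x ≠ u, the distance from x to v in G' equals the distance from x to v in G. -/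
private lemma key_walk {V : Type*} (G : SimpleGraph V) (hconn : G.Connected)
    (u v : V) (hne : u ≠ v) (hdom : closedNbhd G u ⊆ closedNbhd G v) :
    ∀ n (x : V) (hx : x ≠ u), G.dist x v ≤ n →
      ∃ p : (G.induce {w : V | w ≠ u}).Walk ⟨x, hx⟩ ⟨v, Ne.symm hne⟩,
        p.length ≤ G.dist x v := by
  intro n
  induction n with
  | zero =>
    intro x hx h
    have hr : G.Reachable x v := hconn x v
    have hxv : x = v := by
      by_contra hxv
      have := hr.pos_dist_of_ne hxv
      omega
    subst hxv
    exact ⟨SimpleGraph.Walk.nil, by simp⟩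
  | succ n ih =>
    intro x hx h
    by_cases hxv : x = v
    · subst hxv
      exact ⟨SimpleGraph.Walk.nil, by simp⟩
    · obtain ⟨p, hp⟩ := (hconn x v).exists_walk_length_eq_dist
      cases p with
      | nil => exact absurd rfl hxv
      | @cons _ y _ hadj q =>
        have hq : q.length + 1 = G.dist x v := by simpa using hp
        have hyd : G.dist y v ≤ q.length := SimpleGraph.dist_le q
        by_cases hyu : y = u
        · -- x is adjacent to u, so x ∈ N[v], and x ≠ v, so x adjacent to v
          have hxv' : x ∈ closedNbhd G v := hdom (Or.inr (hyu ▸ hadj).symm)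
          have hadj' : G.Adj v x := by
            cases hxv' with
            | inl h' => exact absurd h' hxv
            | inr h' => exact h'
          have hadjI : (G.induce {w : V | w ≠ u}).Adj ⟨x, hx⟩ ⟨v, Ne.symm hne⟩ :=
            hadj'.symm
          have hpos : 0 < G.dist x v := (hconn x v).pos_dist_of_ne hxv
          exact ⟨hadjI.toWalk, by simp; omega⟩
        · have hyn : G.dist y v ≤ n := by omega
          obtain ⟨q', hq'⟩ := ih y hyu hyn
          have hadjI : (G.induce {w : V | w ≠ u}).Adj ⟨x, hx⟩ ⟨y, hyu⟩ := hadj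
          refine ⟨SimpleGraph.Walk.cons hadjI q', ?_⟩
          simp only [SimpleGraph.Walk.length_cons]
          omega

/-- Deleting a dominated vertex `u` exactly preserves distances to the
dominator `v`. -/
theorem stmt_19 {V : Type*} [Fintype V] (G : SimpleGraph V) (hconn : G.Connected)
    (hcard : 3 ≤ Fintype.card V) (u v : V) (hne : u ≠ v)
    (hdom : closedNbhd G u ⊆ closedNbhd G v)
    (x : V) (hx : x ≠ u) :
    (G.induce {w : V | w ≠ u}).dist ⟨x, hx⟩ ⟨v, Ne.symm hne⟩ = G.dist x v := by
  obtain ⟨p, hp⟩ := key_walk G hconn u v hne hdom (G.dist x v) x hx le_rfl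
  refine le_antisymm (le_trans (SimpleGraph.dist_le p) hp) ?_
  -- lower bound: map a shortest induced walk into G
  have hr : (G.induce {w : V | w ≠ u}).Reachable ⟨x, hx⟩ ⟨v, Ne.symm hne⟩ := ⟨p⟩
  obtain ⟨q, hq⟩ := hr.exists_walk_length_eq_dist
  let f : G.induce {w : V | w ≠ u} →g G := ⟨Subtype.val, fun h => h⟩
  have := SimpleGraph.dist_le (q.map f)
  simp [hq] at this
  exact this
end
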